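/- Let (T, d) be a metric space, let q : ℝ → ℝ be monotonically increasing (nondecreasing), let P_I, P_star be points of T, let m, k be real numbers with k ≤ m and d(P_I, P_star) ≤ m − k, and let S be a nonempty finite family of points of T. Define C = 1 / q( (1/|S|) · Σ_{P' ∈ S} d(P_star, P') ) and H = 1 / q( (1/|S|) · Σ_{P' ∈ S} ((m − k) + d(P_I, P')) ). If q takes strictly positive values at both averages appearing in these definitions, then H ≤ C. (This is the admissibility of the AutoSWAP structural diversity heuristic: the heuristic value H of the incomplete program P_I lower-bounds the structural diversity cost C of every complete descendant P_star.) -/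
import Mathlib

theorem autoswap_heuristic_admissible {T : Type*} [MetricSpace T]
    (q : ℝ → ℝ) (hq : Monotone q)
    (P_I P_star : T) (m k : ℝ) (hkm : k ≤ m)
    (h : dist P_I P_star ≤ m - k)
    {ι : Type*} (S : Finset ι) (hS : S.Nonempty) (f : ι → T)
    (hqC : 0 < q ((1 / (S.card : ℝ)) * ∑ P' ∈ S, dist P_star (f P')))
    (hqH : 0 < q ((1 / (S.card : ℝ)) * ∑ P' ∈ S, ((m - k) + dist P_I (f P')))) :
    1 / q ((1 / (S.card : ℝ)) * ∑ P' ∈ S, ((m - k) + dist P_I (f P')))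
      ≤ 1 / q ((1 / (S.card : ℝ)) * ∑ P' ∈ S, dist P_star (f P')) := by
  apply one_div_le_one_div_of_le hqC
  apply hq
  apply mul_le_mul_of_nonneg_left _ (by positivity)
  apply Finset.sum_le_sum
  intro i _
  calc dist P_star (f i) ≤ dist P_star P_I + dist P_I (f i) := dist_triangle _ _ _
    _ ≤ (m - k) + dist P_I (f i) := by
        have := dist_comm P_I P_star ▸ h
        linarith
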